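/- Ergotropy, viewed as a function of the purifying unit vector, is Lipschitz continuous with Lipschitz constant 4‖H‖: for unit vectors ψ, φ in C^N ⊗ C^{N'}, |Erg(Tr_B|ψ⟩⟨ψ|) - Erg(Tr_B|φ⟩⟨φ|)| ≤ 4‖H‖·‖ψ - φ‖₂. -/

import Mathlib

open Matrix

/-- Reduced density matrix on the first factor of `ℂ^N ⊗ ℂ^{N'}`. -/
noncomputable def redDM {N N' : ℕ} (ψ : EuclideanSpace ℂ (Fin N × Fin N')) :
    Matrix (Fin N) (Fin N) ℂ :=
  fun i j => ∑ k : Fin N', ψ (i, k) * star (ψ (j, k))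

/-- Ergotropy: `Erg(ρ) = Tr[Hρ] - inf_{U ∈ U(N)} Tr[H U ρ U†]`. -/
noncomputable def erg {N : ℕ} (H ρ : Matrix (Fin N) (Fin N) ℂ) : ℝ :=
  ((H * ρ).trace).re -
    sInf {x : ℝ | ∃ U ∈ Matrix.unitaryGroup (Fin N) ℂ,
      x = ((H * (U * ρ * star U)).trace).re}

/-!
For every matrix `M`, `Tr[M ρ_ψ]` is the quadratic form `⟪ψ, (M ⊗ 1) ψ⟫`, computed column by
column of `ψ` viewed as an `N × N'` matrix; hence it changes by at most `2‖M‖‖ψ - φ‖` between unit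
vectors. Both terms of the ergotropy are of this form: the passive energy is an infimum over
`M = U†HU`, all of norm `‖H‖`, and an infimum of uniformly Lipschitz functions is Lipschitz with
the same constant. The two terms together give `4‖H‖`.
-/

lemma sInf_le_sInf_add_of_le_add {ι : Type*} {s : Set ι} (hs : s.Nonempty) {f g : ι → ℝ}
    {c : ℝ} (hf : BddBelow {x | ∃ i ∈ s, x = f i}) (h : ∀ i ∈ s, f i ≤ g i + c) :
    sInf {x | ∃ i ∈ s, x = f i} ≤ sInf {x | ∃ i ∈ s, x = g i} + c := by
  obtain ⟨i₀, hi₀⟩ := hs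
  rw [← sub_le_iff_le_add]
  refine le_csInf ⟨_, i₀, hi₀, rfl⟩ ?_
  rintro _ ⟨i, hi, rfl⟩
  exact sub_le_iff_le_add.mpr ((csInf_le hf ⟨i, hi, rfl⟩).trans (h i hi))

lemma abs_sInf_sub_sInf_le {ι : Type*} {s : Set ι} (hs : s.Nonempty) {f g : ι → ℝ} {c : ℝ}
    (hf : BddBelow {x | ∃ i ∈ s, x = f i}) (hg : BddBelow {x | ∃ i ∈ s, x = g i})
    (h : ∀ i ∈ s, |f i - g i| ≤ c) :
    |sInf {x | ∃ i ∈ s, x = f i} - sInf {x | ∃ i ∈ s, x = g i}| ≤ c := by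
  have hfg := sInf_le_sInf_add_of_le_add (g := g) hs hf fun i hi => by
    linarith [(abs_le.mp (h i hi)).2]
  have hgf := sInf_le_sInf_add_of_le_add (g := f) hs hg fun i hi => by
    linarith [(abs_le.mp (h i hi)).1]
  exact abs_sub_le_iff.mpr ⟨by linarith, by linarith⟩

section QuadraticForm

variable {E : Type*} [NormedAddCommGroup E] [InnerProductSpace ℂ E]

lemma norm_inner_map_self_sub_le (A : E →L[ℂ] E) (x y : E) :
    ‖inner ℂ x (A x) - inner ℂ y (A y)‖ ≤ ‖A‖ * ((‖x‖ + ‖y‖) * ‖x - y‖) := by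
  have hsplit : inner ℂ x (A x) - inner ℂ y (A y) =
      inner ℂ (x - y) (A x) + inner ℂ y (A (x - y)) := by
    rw [inner_sub_left, map_sub, inner_sub_right]; ring
  calc ‖inner ℂ x (A x) - inner ℂ y (A y)‖
      ≤ ‖x - y‖ * ‖A x‖ + ‖y‖ * ‖A (x - y)‖ := by
        rw [hsplit]
        exact (norm_add_le _ _).trans (add_le_add (norm_inner_le_norm _ _) (norm_inner_le_norm _ _))
    _ ≤ ‖x - y‖ * (‖A‖ * ‖x‖) + ‖y‖ * (‖A‖ * ‖x - y‖) := by
        gcongr <;> exact A.le_opNorm _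
    _ = ‖A‖ * ((‖x‖ + ‖y‖) * ‖x - y‖) := by ring

end QuadraticForm

section ReducedDensityMatrix

variable {N N' : ℕ}

def column (ψ : EuclideanSpace ℂ (Fin N × Fin N')) (k : Fin N') : EuclideanSpace ℂ (Fin N) :=
  WithLp.toLp 2 fun i => ψ (i, k)

lemma column_sub (ψ φ : EuclideanSpace ℂ (Fin N × Fin N')) (k : Fin N') :
    column (ψ - φ) k = column ψ k - column φ k := rfl

lemma sum_norm_column_sq (ψ : EuclideanSpace ℂ (Fin N × Fin N')) :
    ∑ k, ‖column ψ k‖ ^ 2 = ‖ψ‖ ^ 2 := by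
  simp only [EuclideanSpace.norm_sq_eq, Fintype.sum_prod_type]
  exact Finset.sum_comm

lemma sum_norm_column_mul_le (ψ φ : EuclideanSpace ℂ (Fin N × Fin N')) :
    ∑ k, ‖column ψ k‖ * ‖column φ k‖ ≤ ‖ψ‖ * ‖φ‖ := by
  simpa only [sum_norm_column_sq, Real.sqrt_sq (norm_nonneg _)] using
    Real.sum_mul_le_sqrt_mul_sqrt Finset.univ (fun k => ‖column ψ k‖) (fun k => ‖column φ k‖)

lemma trace_mul_redDM (M : Matrix (Fin N) (Fin N) ℂ) (ψ : EuclideanSpace ℂ (Fin N × Fin N')) :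
    (M * redDM ψ).trace =
      ∑ k, inner ℂ (column ψ k) (Matrix.toEuclideanCLM (𝕜 := ℂ) M (column ψ k)) := by
  simp only [Matrix.trace, Matrix.diag_apply, Matrix.mul_apply, redDM, PiLp.inner_apply,
    RCLike.inner_apply, column, Matrix.toEuclideanCLM_toLp, Matrix.mulVec, dotProduct]
  simp_rw [Finset.mul_sum, Finset.sum_mul]
  rw [Finset.sum_comm_cycle]
  congr! 3 with k _ i _ j _
  rw [starRingEnd_apply]
  ring

lemma redDM_zero : redDM (0 : EuclideanSpace ℂ (Fin N × Fin N')) = 0 := by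
  ext i j
  simp [redDM]

lemma abs_re_trace_mul_redDM_sub_le (M : Matrix (Fin N) (Fin N) ℂ)
    (ψ φ : EuclideanSpace ℂ (Fin N × Fin N')) :
    |(M * redDM ψ).trace.re - (M * redDM φ).trace.re| ≤
      ‖Matrix.toEuclideanCLM (𝕜 := ℂ) M‖ * ((‖ψ‖ + ‖φ‖) * ‖ψ - φ‖) := by
  set A := Matrix.toEuclideanCLM (𝕜 := ℂ) M
  rw [trace_mul_redDM, trace_mul_redDM, ← Complex.sub_re, ← Finset.sum_sub_distrib]
  calc _ ≤ ∑ k, ‖inner ℂ (column ψ k) (A (column ψ k)) - inner ℂ (column φ k) (A (column φ k))‖ :=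
        (Complex.abs_re_le_norm _).trans (norm_sum_le _ _)
    _ ≤ ∑ k, ‖A‖ * ((‖column ψ k‖ + ‖column φ k‖) * ‖column (ψ - φ) k‖) :=
        Finset.sum_le_sum fun k _ => column_sub ψ φ k ▸ norm_inner_map_self_sub_le A _ _
    _ = ‖A‖ * (∑ k, ‖column ψ k‖ * ‖column (ψ - φ) k‖ +
          ∑ k, ‖column φ k‖ * ‖column (ψ - φ) k‖) := by
        rw [← Finset.sum_add_distrib, Finset.mul_sum]
        simp only [add_mul]
    _ ≤ ‖A‖ * ((‖ψ‖ + ‖φ‖) * ‖ψ - φ‖) := by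
        rw [add_mul]
        gcongr <;> exact sum_norm_column_mul_le _ _

lemma abs_re_trace_mul_redDM_le (M : Matrix (Fin N) (Fin N) ℂ)
    (ψ : EuclideanSpace ℂ (Fin N × Fin N')) :
    |(M * redDM ψ).trace.re| ≤ ‖Matrix.toEuclideanCLM (𝕜 := ℂ) M‖ * ‖ψ‖ ^ 2 := by
  simpa [redDM_zero, sq] using abs_re_trace_mul_redDM_sub_le M ψ 0

end ReducedDensityMatrix

section UnitaryConjugation

variable {N : ℕ}

lemma trace_mul_unitary_conj (H U ρ : Matrix (Fin N) (Fin N) ℂ) :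
    (H * (U * ρ * star U)).trace = (star U * H * U * ρ).trace := by
  rw [← Matrix.mul_assoc, Matrix.trace_mul_comm]
  simp only [Matrix.mul_assoc]

lemma norm_toEuclideanCLM_unitary_conj (H : Matrix (Fin N) (Fin N) ℂ)
    {U : Matrix (Fin N) (Fin N) ℂ} (hU : U ∈ Matrix.unitaryGroup (Fin N) ℂ) :
    ‖Matrix.toEuclideanCLM (𝕜 := ℂ) (star U * H * U)‖ =
      ‖Matrix.toEuclideanCLM (𝕜 := ℂ) H‖ := by
  have hV := Unitary.map_mem (Matrix.toEuclideanCLM (𝕜 := ℂ) (n := Fin N)) hU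
  rw [map_mul, map_mul, map_star, mul_assoc,
    CStarRing.norm_mem_unitary_mul _ (Unitary.star_mem hV), CStarRing.norm_mul_mem_unitary _ hV]

end UnitaryConjugation

section PassiveEnergy

variable {N N' : ℕ}

noncomputable def passiveEnergy (H ρ : Matrix (Fin N) (Fin N) ℂ) : ℝ :=
  sInf {x : ℝ | ∃ U ∈ Matrix.unitaryGroup (Fin N) ℂ, x = ((H * (U * ρ * star U)).trace).re}

lemma erg_eq_sub_passiveEnergy (H ρ : Matrix (Fin N) (Fin N) ℂ) :
    erg H ρ = (H * ρ).trace.re - passiveEnergy H ρ := rfl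

lemma bddBelow_re_trace_mul_unitary_conj_redDM (H : Matrix (Fin N) (Fin N) ℂ)
    (ψ : EuclideanSpace ℂ (Fin N × Fin N')) :
    BddBelow {x : ℝ | ∃ U ∈ Matrix.unitaryGroup (Fin N) ℂ,
      x = (H * (U * redDM ψ * star U)).trace.re} := by
  refine ⟨-(‖Matrix.toEuclideanCLM (𝕜 := ℂ) H‖ * ‖ψ‖ ^ 2), ?_⟩
  rintro _ ⟨U, hU, rfl⟩
  rw [trace_mul_unitary_conj, ← norm_toEuclideanCLM_unitary_conj H hU]
  exact neg_le_of_abs_le (abs_re_trace_mul_redDM_le _ ψ)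

lemma abs_passiveEnergy_redDM_sub_le (H : Matrix (Fin N) (Fin N) ℂ)
    (ψ φ : EuclideanSpace ℂ (Fin N × Fin N')) :
    |passiveEnergy H (redDM ψ) - passiveEnergy H (redDM φ)| ≤
      ‖Matrix.toEuclideanCLM (𝕜 := ℂ) H‖ * ((‖ψ‖ + ‖φ‖) * ‖ψ - φ‖) := by
  refine abs_sInf_sub_sInf_le ⟨1, one_mem _⟩ (bddBelow_re_trace_mul_unitary_conj_redDM H ψ)
    (bddBelow_re_trace_mul_unitary_conj_redDM H φ) fun U hU => ?_
  rw [trace_mul_unitary_conj, trace_mul_unitary_conj, ← norm_toEuclideanCLM_unitary_conj H hU]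
  exact abs_re_trace_mul_redDM_sub_le _ ψ φ

end PassiveEnergy

theorem erg_lipschitz_general {N N' : ℕ} (H : Matrix (Fin N) (Fin N) ℂ)
    (ψ φ : EuclideanSpace ℂ (Fin N × Fin N'))
    (hψ : ‖ψ‖ = 1) (hφ : ‖φ‖ = 1) :
    |erg H (redDM ψ) - erg H (redDM φ)| ≤
      4 * ‖Matrix.toEuclideanCLM (𝕜 := ℂ) H‖ * ‖ψ - φ‖ := by
  have henergy := abs_re_trace_mul_redDM_sub_le H ψ φ
  have hpassive := abs_passiveEnergy_redDM_sub_le H ψ φ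
  rw [hψ, hφ] at henergy hpassive
  rw [erg_eq_sub_passiveEnergy, erg_eq_sub_passiveEnergy]
  calc _ = |((H * redDM ψ).trace.re - (H * redDM φ).trace.re) -
        (passiveEnergy H (redDM ψ) - passiveEnergy H (redDM φ))| := by ring_nf
    _ ≤ _ := (abs_sub _ _).trans (add_le_add henergy hpassive)
    _ = _ := by ring

/-- Ergotropy, as a function of the purifying unit vector, is Lipschitz
continuous with Lipschitz constant `4‖H‖`. -/
theorem erg_lipschitz {N N' : ℕ} (H : Matrix (Fin N) (Fin N) ℂ)
    (hH : H.IsHermitian) (ψ φ : EuclideanSpace ℂ (Fin N × Fin N'))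
    (hψ : ‖ψ‖ = 1) (hφ : ‖φ‖ = 1) :
    |erg H (redDM ψ) - erg H (redDM φ)| ≤
      4 * ‖Matrix.toEuclideanCLM (𝕜 := ℂ) H‖ * ‖ψ - φ‖ :=
  erg_lipschitz_general H ψ φ hψ hφ
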